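/- For a group G with coarse structure 𝓔, the following are equivalent: (i) (G,𝓔) is a coarse group (multiplication and inversion are coarse maps); (ii) (G,𝓔) is both a left and a right coarse group; (iii) 𝓔 = 𝓔_𝓘 for some invariant group bornology 𝓘 on G (a group bornology with ∪_{g∈G} g⁻¹Ag ∈ 𝓘 for each A ∈ 𝓘). -/

import Mathlib

open Pointwise

def IsIdeal {X : Type*} (I : Set (Set X)) : Prop :=
  ∅ ∈ I ∧ (∀ A ∈ I, ∀ B : Set X, B ⊆ A → B ∈ I) ∧ (∀ A ∈ I, ∀ B ∈ I, A ∪ B ∈ I)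

def IsBornology {X : Type*} (B : Set (Set X)) : Prop :=
  IsIdeal B ∧ (∀ A : Set X, A.Finite → A ∈ B) ∧ ⋃₀ B = Set.univ

def IsGroupBornology {G : Type*} [Group G] (I : Set (Set G)) : Prop :=
  IsBornology I ∧ ∀ A ∈ I, ∀ B ∈ I, A * B⁻¹ ∈ I

def relComp {X : Type*} (ε δ : Set (X × X)) : Set (X × X) :=
  {p | ∃ y, (p.1, y) ∈ ε ∧ (y, p.2) ∈ δ}

def relInv {X : Type*} (ε : Set (X × X)) : Set (X × X) :=
  {p | (p.2, p.1) ∈ ε}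

def IsBallStructure {X : Type*} (E : Set (Set (X × X))) : Prop :=
  (∀ ε ∈ E, (SetRel.id : Set (X × X)) ⊆ ε) ∧
  (∀ ε ∈ E, ∀ δ ∈ E, ∃ lam ∈ E, relComp ε (relInv δ) ⊆ lam) ∧
  ⋃₀ E = Set.univ

def IsCoarseStructure {X : Type*} (E : Set (Set (X × X))) : Prop :=
  IsBallStructure E ∧
  ∀ ε ∈ E, ∀ δ : Set (X × X), (SetRel.id : Set (X × X)) ⊆ δ → δ ⊆ ε → δ ∈ E

def ball {X : Type*} (ε : Set (X × X)) (x : X) : Set X :=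
  {y | (x, y) ∈ ε}

def IsBoundedIn {X : Type*} (E : Set (Set (X × X))) (B : Set X) : Prop :=
  B = ∅ ∨ ∃ x : X, ∃ ε ∈ E, B ⊆ ball ε x

/-- The entourage `ε_A = {(x,y) : y ∈ {x} ∪ Ax}` determined by `A ⊆ G`. -/
def entOf {G : Type*} [Group G] (A : Set G) : Set (G × G) :=
  {p | p.2 = p.1 ∨ ∃ a ∈ A, p.2 = a * p.1}

/-- The coarse structure `𝓔_𝓘` on a group determined by a group bornology `𝓘`. -/
def EI {G : Type*} [Group G] (I : Set (Set G)) : Set (Set (G × G)) :=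
  {δ | (SetRel.id : Set (G × G)) ⊆ δ ∧ ∃ A ∈ I, δ ⊆ entOf A}

/-- The multiplication `G × G → G` is a coarse map (with respect to the
product coarse structure, expressed via its base of product entourages). -/
def MulIsCoarse {G : Type*} [Group G] (E : Set (Set (G × G))) : Prop :=
  ∀ ε ∈ E, ∀ δ ∈ E, ∃ ε' ∈ E, ∀ x₁ y₁ x₂ y₂ : G,
    (x₁, y₁) ∈ ε → (x₂, y₂) ∈ δ → (x₁ * x₂, y₁ * y₂) ∈ ε'

/-- The inversion is a coarse map. -/
def InvIsCoarse {G : Type*} [Group G] (E : Set (Set (G × G))) : Prop :=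
  ∀ ε ∈ E, ∃ ε' ∈ E, ∀ x y : G, (x, y) ∈ ε → (x⁻¹, y⁻¹) ∈ ε'

def IsLeftCoarseGroup {G : Type*} [Group G] (E : Set (Set (G × G))) : Prop :=
  ∀ ε ∈ E, ∃ ε' ∈ E, ∀ g x y : G, (x, y) ∈ ε → (g * x, g * y) ∈ ε'

def IsRightCoarseGroup {G : Type*} [Group G] (E : Set (Set (G × G))) : Prop :=
  ∀ ε ∈ E, ∃ ε' ∈ E, ∀ g x y : G, (x, y) ∈ ε → (x * g, y * g) ∈ ε'

def IsInvariantGroupBornology {G : Type*} [Group G] (I : Set (Set G)) : Prop :=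
  IsGroupBornology I ∧ ∀ A ∈ I, {x : G | ∃ g : G, ∃ a ∈ A, x = g⁻¹ * a * g} ∈ I

/-! Left and right translations give multiplication as the composite `x₁x₂ ~ y₁x₂ ~ y₁y₂`, and
inversion via `(x, y) ↦ (1, x⁻¹y) ↦ (y⁻¹, x⁻¹)`. The bornology in (iii) consists of the sets
bounded around `1`: right invariance moves each entourage `ε` onto `{y x⁻¹ | (x, y) ∈ ε}`, a set
bounded around `1` whose `ε_A` contains `ε`, and left invariance makes the bornology closed under
conjugation and `A B⁻¹`. Conversely every `ε_A` is right invariant, and translating it on the left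
by `g` lands in `ε_{gAg⁻¹}`. -/

namespace IsCoarseStructure

variable {X : Type*} {E : Set (Set (X × X))} {ε δ : Set (X × X)}

lemma refl_mem (h : IsCoarseStructure E) (hε : ε ∈ E) (x : X) : (x, x) ∈ ε :=
  h.1.1 ε hε rfl

lemma mem_of_subset (h : IsCoarseStructure E) (hε : ε ∈ E) (hδε : δ ⊆ ε)
    (hδ : ∀ x, (x, x) ∈ δ) : δ ∈ E :=
  h.2 ε hε δ (by rintro ⟨x, y⟩ (rfl : x = y); exact hδ x) hδε

lemma exists_mem_of_pair (h : IsCoarseStructure E) (x y : X) : ∃ ε ∈ E, (x, y) ∈ ε := by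
  obtain ⟨ε, hε, hxy⟩ : (x, y) ∈ ⋃₀ E := h.1.2.2 ▸ Set.mem_univ _
  exact ⟨ε, hε, hxy⟩

lemma id_mem [Nonempty X] (h : IsCoarseStructure E) : (SetRel.id : Set (X × X)) ∈ E := by
  obtain ⟨ε, hε, -⟩ := h.exists_mem_of_pair (Classical.arbitrary X) (Classical.arbitrary X)
  exact h.mem_of_subset hε (h.1.1 ε hε) fun _ => rfl

lemma relInv_mem (h : IsCoarseStructure E) (hε : ε ∈ E) : relInv ε ∈ E := by
  obtain ⟨lam, hlam, hsub⟩ := h.1.2.1 ε hε ε hε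
  exact h.mem_of_subset hlam (fun p hp => hsub ⟨p.1, h.refl_mem hε _, hp⟩)
    fun x => h.refl_mem hε x

lemma relComp_mem (h : IsCoarseStructure E) (hε : ε ∈ E) (hδ : δ ∈ E) :
    relComp ε δ ∈ E := by
  obtain ⟨lam, hlam, hsub⟩ := h.1.2.1 ε hε (relInv δ) (h.relInv_mem hδ)
  exact h.mem_of_subset hlam hsub fun x => ⟨x, h.refl_mem hε x, h.refl_mem hδ x⟩

lemma union_mem (h : IsCoarseStructure E) (hε : ε ∈ E) (hδ : δ ∈ E) : ε ∪ δ ∈ E := by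
  refine h.mem_of_subset (h.relComp_mem hε hδ) ?_ fun x => Or.inl (h.refl_mem hε x)
  rintro ⟨x, y⟩ (hxy | hxy)
  · exact ⟨y, hxy, h.refl_mem hδ y⟩
  · exact ⟨x, h.refl_mem hε x, hxy⟩

end IsCoarseStructure

def boundedAt {X : Type*} (E : Set (Set (X × X))) (x : X) : Set (Set X) :=
  {A | ∃ ε ∈ E, A ⊆ ball ε x}

lemma IsCoarseStructure.isBornology_boundedAt {X : Type*} {E : Set (Set (X × X))}
    (h : IsCoarseStructure E) (x : X) : IsBornology (boundedAt E x) := by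
  have singleton_mem (y : X) : {y} ∈ boundedAt E x := by
    obtain ⟨ε, hε, hxy⟩ := h.exists_mem_of_pair x y
    exact ⟨ε, hε, Set.singleton_subset_iff.mpr hxy⟩
  have empty_mem : ∅ ∈ boundedAt E x := by
    obtain ⟨ε, hε, -⟩ := h.exists_mem_of_pair x x
    exact ⟨ε, hε, Set.empty_subset _⟩
  have union_mem : ∀ A ∈ boundedAt E x, ∀ B ∈ boundedAt E x, A ∪ B ∈ boundedAt E x := by
    rintro A ⟨ε, hε, hA⟩ B ⟨δ, hδ, hB⟩
    exact ⟨ε ∪ δ, h.union_mem hε hδ, Set.union_subset_union hA hB⟩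
  refine ⟨⟨empty_mem, fun A ⟨ε, hε, hA⟩ B hBA => ⟨ε, hε, hBA.trans hA⟩, union_mem⟩,
    fun A hA => ?_, Set.eq_univ_of_forall fun y => ⟨{y}, singleton_mem y, rfl⟩⟩
  induction A, hA using Set.Finite.induction_on with
  | empty => exact empty_mem
  | insert _ _ ih => exact union_mem _ (singleton_mem _) _ ih

lemma mem_entOf {G : Type*} [Group G] {A : Set G} {x y : G} :
    (x, y) ∈ entOf A ↔ y = x ∨ ∃ a ∈ A, y = a * x :=
  Iff.rfl

section CoarseGroup

variable {G : Type*} [Group G] {E : Set (Set (G × G))}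

lemma MulIsCoarse.isLeftCoarseGroup (hmul : MulIsCoarse E) (h : IsCoarseStructure E) :
    IsLeftCoarseGroup E := fun ε hε => by
  obtain ⟨ε', hε', hprod⟩ := hmul SetRel.id h.id_mem ε hε
  exact ⟨ε', hε', fun g x y hxy => hprod g g x y rfl hxy⟩

lemma MulIsCoarse.isRightCoarseGroup (hmul : MulIsCoarse E) (h : IsCoarseStructure E) :
    IsRightCoarseGroup E := fun ε hε => by
  obtain ⟨ε', hε', hprod⟩ := hmul ε hε SetRel.id h.id_mem
  exact ⟨ε', hε', fun g x y hxy => hprod x y g g hxy rfl⟩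

lemma IsLeftCoarseGroup.mulIsCoarse (hL : IsLeftCoarseGroup E) (hR : IsRightCoarseGroup E)
    (h : IsCoarseStructure E) : MulIsCoarse E := fun ε hε δ hδ => by
  obtain ⟨ε', hε', hεR⟩ := hR ε hε
  obtain ⟨δ', hδ', hδL⟩ := hL δ hδ
  exact ⟨relComp ε' δ', h.relComp_mem hε' hδ', fun x₁ y₁ x₂ y₂ h₁ h₂ =>
    ⟨y₁ * x₂, hεR x₂ x₁ y₁ h₁, hδL y₁ x₂ y₂ h₂⟩⟩

lemma IsLeftCoarseGroup.invIsCoarse (hL : IsLeftCoarseGroup E) (hR : IsRightCoarseGroup E)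
    (h : IsCoarseStructure E) : InvIsCoarse E := fun ε hε => by
  obtain ⟨ε₁, hε₁, hεL⟩ := hL ε hε
  obtain ⟨ε₂, hε₂, hεR⟩ := hR ε₁ hε₁
  refine ⟨relInv ε₂, h.relInv_mem hε₂, fun x y hxy => ?_⟩
  simpa [relInv, mul_assoc] using hεR y⁻¹ _ _ (hεL x⁻¹ x y hxy)

lemma IsRightCoarseGroup.eq_EI_boundedAt_one (hR : IsRightCoarseGroup E)
    (h : IsCoarseStructure E) : E = EI (boundedAt E 1) := by
  ext ε
  constructor
  · intro hε
    obtain ⟨ε', hε', hεR⟩ := hR ε hε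
    refine ⟨h.1.1 ε hε, (fun p => p.2 * p.1⁻¹) '' ε, ⟨ε', hε', ?_⟩, ?_⟩
    · rintro _ ⟨⟨x, y⟩, hxy, rfl⟩
      show (1, y * x⁻¹) ∈ ε'
      simpa using hεR x⁻¹ x y hxy
    · rintro ⟨x, y⟩ hxy
      exact Or.inr ⟨y * x⁻¹, ⟨(x, y), hxy, rfl⟩, by simp⟩
  · rintro ⟨hid, A, ⟨δ, hδ, hA⟩, hεA⟩
    obtain ⟨δ', hδ', hδR⟩ := hR δ hδ
    refine h.2 δ' hδ' ε hid (hεA.trans ?_)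
    rintro ⟨x, y⟩ hxy
    rcases mem_entOf.mp hxy with rfl | ⟨a, ha, rfl⟩
    · simpa using hδR y 1 1 (h.refl_mem hδ 1)
    · simpa using hδR x 1 a (hA ha)

lemma IsLeftCoarseGroup.isInvariantGroupBornology_boundedAt_one (hL : IsLeftCoarseGroup E)
    (hR : IsRightCoarseGroup E) (h : IsCoarseStructure E) :
    IsInvariantGroupBornology (boundedAt E 1) := by
  refine ⟨⟨h.isBornology_boundedAt 1, ?_⟩, ?_⟩
  · rintro A ⟨ε, hε, hA⟩ B ⟨δ, hδ, hB⟩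
    obtain ⟨δ₁, hδ₁, hδR⟩ := hR δ hδ
    obtain ⟨δ₂, hδ₂, hδL⟩ := hL (relInv δ₁) (h.relInv_mem hδ₁)
    refine ⟨relComp ε δ₂, h.relComp_mem hε hδ₂, ?_⟩
    rintro _ ⟨a, ha, b, hb, rfl⟩
    -- `1 ~ b⁻¹` gives `b ~ 1`, hence `a ~ a * b`
    have hb₁ : (b, 1) ∈ δ₁ := by simpa using hδR b 1 b⁻¹ (hB hb)
    exact ⟨a, hA ha, by simpa using hδL a 1 b hb₁⟩
  · rintro A ⟨ε, hε, hA⟩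
    obtain ⟨ε₁, hε₁, hεL⟩ := hL ε hε
    obtain ⟨ε₂, hε₂, hεR⟩ := hR ε₁ hε₁
    refine ⟨ε₂, hε₂, ?_⟩
    rintro _ ⟨g, a, ha, rfl⟩
    show (1, g⁻¹ * a * g) ∈ ε₂
    simpa [mul_assoc] using hεR g _ _ (hεL g⁻¹ 1 a (hA ha))

end CoarseGroup

section GroupBornology

variable {G : Type*} [Group G] {I : Set (Set G)}

lemma entOf_mem_EI {A : Set G} (hA : A ∈ I) : entOf A ∈ EI I :=
  ⟨fun _ hp => Or.inl (SetRel.mem_id.mp hp).symm, A, hA, le_rfl⟩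

lemma isRightCoarseGroup_EI (I : Set (Set G)) : IsRightCoarseGroup (EI I) := by
  rintro ε ⟨-, A, hA, hεA⟩
  refine ⟨entOf A, entOf_mem_EI hA, fun g x y hxy => ?_⟩
  rcases mem_entOf.mp (hεA hxy) with rfl | ⟨a, ha, rfl⟩
  · exact Or.inl rfl
  · exact Or.inr ⟨a, ha, mul_assoc a x g⟩

lemma isLeftCoarseGroup_EI
    (hI : ∀ A ∈ I, {x : G | ∃ g : G, ∃ a ∈ A, x = g⁻¹ * a * g} ∈ I) :
    IsLeftCoarseGroup (EI I) := by
  rintro ε ⟨-, A, hA, hεA⟩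
  refine ⟨entOf _, entOf_mem_EI (hI A hA), fun g x y hxy => ?_⟩
  rcases mem_entOf.mp (hεA hxy) with rfl | ⟨a, ha, rfl⟩
  · exact Or.inl rfl
  · exact Or.inr ⟨g * a * g⁻¹, ⟨g⁻¹, a, ha, by group⟩, by group⟩

end GroupBornology

theorem stmt14 {G : Type*} [Group G] (𝓔 : Set (Set (G × G)))
    (h : IsCoarseStructure 𝓔) :
    ((MulIsCoarse 𝓔 ∧ InvIsCoarse 𝓔) ↔
        (IsLeftCoarseGroup 𝓔 ∧ IsRightCoarseGroup 𝓔)) ∧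
    ((IsLeftCoarseGroup 𝓔 ∧ IsRightCoarseGroup 𝓔) ↔
        ∃ 𝓘 : Set (Set G), IsInvariantGroupBornology 𝓘 ∧ 𝓔 = EI 𝓘) := by
  refine ⟨⟨fun ⟨hmul, _⟩ => ⟨hmul.isLeftCoarseGroup h, hmul.isRightCoarseGroup h⟩,
    fun ⟨hL, hR⟩ => ⟨hL.mulIsCoarse hR h, hL.invIsCoarse hR h⟩⟩, ⟨?_, ?_⟩⟩
  · rintro ⟨hL, hR⟩
    exact ⟨boundedAt 𝓔 1, hL.isInvariantGroupBornology_boundedAt_one hR h,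
      hR.eq_EI_boundedAt_one h⟩
  · rintro ⟨𝓘, h𝓘, rfl⟩
    exact ⟨isLeftCoarseGroup_EI h𝓘.2, isRightCoarseGroup_EI 𝓘⟩
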